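/- Let Ω be a finite subset of vertices of a locally finite graph G, l a positive integer, and let λ_k^l, λ_k^{2l} denote the k-th smallest eigenvalues of (-1)^l Δ_Ω^{l,D} and Δ_Ω^{2l,D} respectively. Then for all 1 ≤ k ≤ |Ω|, (λ_k^l)² ≤ λ_k^{2l}. -/

import Mathlib

open Finset

variable {V : Type*}

noncomputable def graphLap (G : SimpleGraph V) [DecidableRel G.Adj] [G.LocallyFinite]
    (f : V → ℂ) : V → ℂ :=
  fun x => ∑ y ∈ G.neighborFinset x, (f y - f x)

noncomputable def extZero [DecidableEq V] (Ω : Finset V) (f : V → ℂ) : V → ℂ :=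
  fun x => if x ∈ Ω then f x else 0

noncomputable def dirichletPolyLap [DecidableEq V] (G : SimpleGraph V) [DecidableRel G.Adj]
    [G.LocallyFinite] (Ω : Finset V) (l : ℕ) (f : V → ℂ) : V → ℂ :=
  (graphLap G)^[l] (extZero Ω f)

noncomputable def innerOmega (Ω : Finset V) (f g : V → ℂ) : ℂ :=
  ∑ x ∈ Ω, f x * (starRingEnd ℂ) (g x)

/-- The (real-valued) quadratic form `⟨(-1)^l Δ_Ω^{l,D} f, f⟩_Ω`. -/
noncomputable def dirichletEnergy [DecidableEq V] (G : SimpleGraph V) [DecidableRel G.Adj]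
    [G.LocallyFinite] (Ω : Finset V) (l : ℕ) (f : V → ℂ) : ℝ :=
  (innerOmega Ω (fun x => (-1 : ℂ) ^ l * dirichletPolyLap G Ω l f x) f).re

/-- The `k`-th smallest Dirichlet eigenvalue of `(-1)^l Δ_Ω^{l,D}` (counted with
multiplicity, `k = 1, …, |Ω|`), characterized via the min-max principle. -/
noncomputable def dirichletEigenvalue [DecidableEq V] (G : SimpleGraph V) [DecidableRel G.Adj]
    [G.LocallyFinite] (Ω : Finset V) (l : ℕ) (k : ℕ) : ℝ :=
  sInf { r | ∃ M : Submodule ℂ (V → ℂ), Module.finrank ℂ M = k ∧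
    (∀ f ∈ M, ∀ x ∉ Ω, f x = 0) ∧
    r = sSup { t | ∃ f ∈ M, (∑ x ∈ Ω, Complex.normSq (f x)) = 1 ∧
      t = dirichletEnergy G Ω l f } }

/-
Both eigenvalues are min-max values over the same admissible subspaces `M` of functions supported
in `Ω`, so it suffices to compare, for each `M`, the suprema of the two energies on the unit
sphere of `M`. Pointwise this is Cauchy–Schwarz, `⟨(-1)^l Δ^l f, f⟩² ≤ ‖Δ^l f‖² ‖f‖²`, together
with `‖Δ^l f‖² = ⟨Δ^{2l} f, f⟩`, which holds because `Δ` is symmetric on finitely supported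
functions (summation by parts). Summation by parts also shows `Δ ≤ 0`, so all energies are
nonnegative and squaring preserves the order of the suprema and infima.
-/

open Function ComplexConjugate

section ClosedNeighborFinset

variable [DecidableEq V] (G : SimpleGraph V) [G.LocallyFinite]

def closedNeighborFinset (s : Finset V) : Finset V :=
  s ∪ s.biUnion fun x => G.neighborFinset x

lemma subset_closedNeighborFinset (s : Finset V) :
    s ⊆ closedNeighborFinset G s :=
  subset_union_left

lemma mem_closedNeighborFinset_of_adj {s : Finset V} {x y : V} (hx : x ∈ s)
    (hxy : G.Adj x y) : y ∈ closedNeighborFinset G s :=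
  mem_union_right _ (mem_biUnion.2 ⟨x, hx, (G.mem_neighborFinset x y).2 hxy⟩)

end ClosedNeighborFinset

section Laplacian

variable (G : SimpleGraph V) [DecidableRel G.Adj] [G.LocallyFinite]

lemma support_graphLap_subset [DecidableEq V] {s : Finset V} {g : V → ℂ} (hg : support g ⊆ s) :
    support (graphLap G g) ⊆ closedNeighborFinset G s := by
  refine support_subset_iff'.2 fun x hx => sum_eq_zero fun y hy => ?_
  have hxs : x ∉ s := fun h => hx (subset_closedNeighborFinset G s h)
  have hys : y ∉ s := fun h =>
    hx (mem_closedNeighborFinset_of_adj G h ((G.mem_neighborFinset x y).1 hy).symm)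
  rw [support_subset_iff'.1 hg x hxs, support_subset_iff'.1 hg y hys, sub_zero]

lemma hasFiniteSupport_graphLap {g : V → ℂ} (hg : HasFiniteSupport g) :
    HasFiniteSupport (graphLap G g) := by
  classical
  exact (closedNeighborFinset G hg.toFinset).finite_toSet.subset
    (support_graphLap_subset G hg.coe_toFinset.superset)

lemma hasFiniteSupport_iterate_graphLap (n : ℕ) {g : V → ℂ} (hg : HasFiniteSupport g) :
    HasFiniteSupport ((graphLap G)^[n] g) := by
  induction n with
  | zero => exact hg
  | succ n ih => rw [iterate_succ_apply']; exact hasFiniteSupport_graphLap G ih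

lemma sum_neighborFinset_eq_sum_ite {M : Type*} [AddCommMonoid M] (s : Finset V) (x : V)
    {F : V → M} (hF : ∀ y, G.Adj x y → y ∉ s → F y = 0) :
    ∑ y ∈ G.neighborFinset x, F y = ∑ y ∈ s, if G.Adj x y then F y else 0 := by
  rw [← sum_filter]
  refine (sum_subset (fun y hy => (G.mem_neighborFinset x y).2 (mem_filter.1 hy).2)
    fun y hy hys => ?_).symm
  have hxy := (G.mem_neighborFinset x y).1 hy
  exact hF y hxy fun h => hys (mem_filter.2 ⟨h, hxy⟩)

lemma sum_sum_neighborFinset_swap {M : Type*} [AddCommMonoid M] (s : Finset V)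
    {F : V → V → M} (hF : ∀ x y, G.Adj x y → y ∉ s → F x y = 0 ∧ F y x = 0) :
    ∑ x ∈ s, ∑ y ∈ G.neighborFinset x, F x y = ∑ x ∈ s, ∑ y ∈ G.neighborFinset x, F y x := by
  calc _ = ∑ x ∈ s, ∑ y ∈ s, if G.Adj x y then F x y else 0 :=
        sum_congr rfl fun x _ =>
          sum_neighborFinset_eq_sum_ite G s x fun y hxy hy => (hF x y hxy hy).1
    _ = ∑ x ∈ s, ∑ y ∈ s, if G.Adj x y then F y x else 0 := by
        rw [sum_comm]
        exact sum_congr rfl fun x _ => sum_congr rfl fun y _ => if_congr (G.adj_comm y x) rfl rfl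
    _ = _ :=
        (sum_congr rfl fun x _ =>
          sum_neighborFinset_eq_sum_ite G s x fun y hxy hy => (hF x y hxy hy).2).symm

/-- Summation by parts: the right-hand side is a sum over oriented edges, Hermitian in `g, h` and
nonnegative for `g = h`. -/
lemma two_mul_finsum_graphLap_mul_conj [DecidableEq V] {s : Finset V} {g h : V → ℂ}
    (hg : support g ⊆ s) (hh : support h ⊆ s) :
    2 * ∑ᶠ x, graphLap G g x * conj (h x) =
      -∑ x ∈ closedNeighborFinset G s, ∑ y ∈ G.neighborFinset x,
        (g y - g x) * conj (h y - h x) := by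
  set t := closedNeighborFinset G s
  have hvanish : ∀ x y, G.Adj x y → y ∉ t → g x = 0 ∧ h x = 0 ∧ g y = 0 ∧ h y = 0 := by
    intro x y hxy hy
    have hxs : x ∉ s := fun hx => hy (mem_closedNeighborFinset_of_adj G hx hxy)
    have hys : y ∉ s := fun hy' => hy (subset_closedNeighborFinset G s hy')
    exact ⟨support_subset_iff'.1 hg x hxs, support_subset_iff'.1 hh x hxs,
      support_subset_iff'.1 hg y hys, support_subset_iff'.1 hh y hys⟩
  have hswap := sum_sum_neighborFinset_swap G t (F := fun x y => (g y - g x) * conj (h x))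
    fun x y hxy hy => by
      obtain ⟨hgx, hhx, hgy, hhy⟩ := hvanish x y hxy hy
      simp [hgx, hhx, hgy, hhy]
  rw [finsum_eq_finsetSum_of_support_subset _ (s := t) ?_]
  · simp only [graphLap, sum_mul]
    rw [two_mul]
    nth_rewrite 2 [hswap]
    rw [← sum_add_distrib, ← sum_neg_distrib]
    refine sum_congr rfl fun x _ => ?_
    rw [← sum_add_distrib, ← sum_neg_distrib]
    refine sum_congr rfl fun y _ => ?_
    simp only [map_sub]
    ring
  · refine support_subset_iff'.2 fun x hx => ?_
    rw [support_subset_iff'.1 hh x fun h => hx (subset_closedNeighborFinset G s h), map_zero,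
      mul_zero]

lemma finsum_graphLap_mul_conj_comm {g h : V → ℂ} (hg : HasFiniteSupport g)
    (hh : HasFiniteSupport h) :
    ∑ᶠ x, graphLap G g x * conj (h x) = ∑ᶠ x, g x * conj (graphLap G h x) := by
  classical
  set s := hg.toFinset ∪ hh.toFinset
  have hgs : support g ⊆ s := fun x hx => mem_union_left _ (hg.mem_toFinset.2 hx)
  have hhs : support h ⊆ s := fun x hx => mem_union_right _ (hh.mem_toFinset.2 hx)
  have hflip : ∑ᶠ x, g x * conj (graphLap G h x) = conj (∑ᶠ x, graphLap G h x * conj (g x)) := by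
    rw [map_finsum _ ((hasFiniteSupport_graphLap G hh).fun_mul_left _)]
    simp [mul_comm]
  apply mul_left_cancel₀ (two_ne_zero (α := ℂ))
  have hgreen := congrArg conj (two_mul_finsum_graphLap_mul_conj G hhs hgs)
  rw [map_mul, map_ofNat] at hgreen
  rw [hflip, hgreen, two_mul_finsum_graphLap_mul_conj G hgs hhs]
  simp only [map_neg, map_sum, map_mul, Complex.conj_conj, mul_comm]

lemma re_finsum_graphLap_mul_conj_self_nonpos {g : V → ℂ} (hg : HasFiniteSupport g) :
    (∑ᶠ x, graphLap G g x * conj (g x)).re ≤ 0 := by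
  classical
  have hgreen := congrArg Complex.re
    (two_mul_finsum_graphLap_mul_conj G (s := hg.toFinset) hg.coe_toFinset.ge hg.coe_toFinset.ge)
  simp only [Complex.mul_conj, Complex.neg_re, Complex.re_sum, Complex.ofReal_re,
    Complex.mul_re, Complex.re_ofNat, Complex.im_ofNat, zero_mul, sub_zero] at hgreen
  have : 0 ≤ ∑ x ∈ closedNeighborFinset G hg.toFinset, ∑ y ∈ G.neighborFinset x,
      Complex.normSq (g y - g x) :=
    sum_nonneg fun _ _ => sum_nonneg fun _ _ => Complex.normSq_nonneg _
  linarith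

lemma continuous_graphLap : Continuous (graphLap G) :=
  continuous_pi fun x => continuous_finsetSum _ fun y _ =>
    (continuous_apply y).sub (continuous_apply x)

lemma finsum_iterate_graphLap_mul_conj_comm (n : ℕ) {g h : V → ℂ} (hg : HasFiniteSupport g)
    (hh : HasFiniteSupport h) :
    ∑ᶠ x, (graphLap G)^[n] g x * conj (h x) = ∑ᶠ x, g x * conj ((graphLap G)^[n] h x) := by
  induction n generalizing g with
  | zero => rfl
  | succ n ih =>
    rw [iterate_succ_apply, ih (hasFiniteSupport_graphLap G hg),
      finsum_graphLap_mul_conj_comm G hg (hasFiniteSupport_iterate_graphLap G n hh),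
      iterate_succ_apply']

end Laplacian

lemma norm_sum_mul_conj_sq_le {ι : Type*} (s : Finset ι) (a b : ι → ℂ) :
    ‖∑ i ∈ s, a i * conj (b i)‖ ^ 2 ≤ (∑ i ∈ s, ‖a i‖ ^ 2) * ∑ i ∈ s, ‖b i‖ ^ 2 := by
  calc _ ≤ (∑ i ∈ s, ‖a i‖ * ‖b i‖) ^ 2 := by
        gcongr
        exact (norm_sum_le _ _).trans_eq (by simp)
    _ ≤ _ := sum_mul_sq_le_sq_mul_sq s _ _

lemma norm_finsum_mul_conj_sq_le {ι : Type*} {a b : ι → ℂ} (ha : HasFiniteSupport a)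
    (hb : HasFiniteSupport b) :
    ‖∑ᶠ i, a i * conj (b i)‖ ^ 2 ≤ (∑ᶠ i, ‖a i‖ ^ 2) * ∑ᶠ i, ‖b i‖ ^ 2 := by
  classical
  set s := ha.toFinset ∪ hb.toFinset
  rw [finsum_eq_finsetSum_of_support_subset _ (s := s) ?_,
    finsum_eq_finsetSum_of_support_subset _ (s := s) ?_,
    finsum_eq_finsetSum_of_support_subset _ (s := s) ?_]
  · exact norm_sum_mul_conj_sq_le s a b
  · exact fun i hi => mem_union_right _ (hb.mem_toFinset.2 (by simpa using hi))
  · exact fun i hi => mem_union_left _ (ha.mem_toFinset.2 (by simpa using hi))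
  · exact fun i hi => mem_union_left _ (ha.mem_toFinset.2 (left_ne_zero_of_mul hi))

lemma Complex.re_finsum {ι : Type*} {f : ι → ℂ} (hf : HasFiniteSupport f) :
    (∑ᶠ i, f i).re = ∑ᶠ i, (f i).re :=
  map_finsum Complex.reAddGroupHom hf

section Energy

variable [DecidableEq V] (G : SimpleGraph V) [DecidableRel G.Adj] [G.LocallyFinite]
  (Ω : Finset V)

lemma extZero_of_mem {f : V → ℂ} {x : V} (hx : x ∈ Ω) : extZero Ω f x = f x := if_pos hx

lemma support_extZero_subset (f : V → ℂ) : support (extZero Ω f) ⊆ Ω :=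
  support_subset_iff'.2 fun _ hx => if_neg hx

lemma hasFiniteSupport_extZero (f : V → ℂ) : HasFiniteSupport (extZero Ω f) :=
  Ω.finite_toSet.subset (support_extZero_subset Ω f)

lemma dirichletEnergy_eq_re_finsum (n : ℕ) (f : V → ℂ) :
    dirichletEnergy G Ω n f =
      ((-1) ^ n * ∑ᶠ x, (graphLap G)^[n] (extZero Ω f) x * conj (extZero Ω f x)).re := by
  have hsupp : support (fun x => (graphLap G)^[n] (extZero Ω f) x * conj (extZero Ω f x)) ⊆ Ω :=
    (support_mul_subset_right _ _).trans fun x hx => support_extZero_subset Ω f (by simpa using hx)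
  rw [finsum_eq_finsetSum_of_support_subset _ hsupp, mul_sum]
  refine congrArg Complex.re (sum_congr rfl fun x hx => ?_)
  rw [extZero_of_mem Ω hx, dirichletPolyLap, mul_assoc]

lemma dirichletEnergy_two_mul (m : ℕ) (f : V → ℂ) :
    dirichletEnergy G Ω (2 * m) f = ∑ᶠ x, ‖(graphLap G)^[m] (extZero Ω f) x‖ ^ 2 := by
  have hu := hasFiniteSupport_extZero Ω f
  have hw := hasFiniteSupport_iterate_graphLap G m hu
  rw [dirichletEnergy_eq_re_finsum, pow_mul, neg_one_sq, one_pow, one_mul, two_mul,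
    iterate_add_apply, finsum_iterate_graphLap_mul_conj_comm G m hw hu,
    Complex.re_finsum (hw.fun_mul_left _)]
  simp only [Complex.mul_conj', ← Complex.ofReal_pow, Complex.ofReal_re]

lemma dirichletEnergy_nonneg (n : ℕ) (f : V → ℂ) : 0 ≤ dirichletEnergy G Ω n f := by
  obtain ⟨m, rfl | rfl⟩ := Nat.even_or_odd' n
  · rw [dirichletEnergy_two_mul]
    exact finsum_nonneg fun _ => sq_nonneg _
  · have hu := hasFiniteSupport_extZero Ω f
    rw [dirichletEnergy_eq_re_finsum, pow_succ, pow_mul, neg_one_sq, one_pow, one_mul, neg_one_mul,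
      Complex.neg_re, neg_nonneg, show 2 * m + 1 = m + (m + 1) by ring, iterate_add_apply,
      finsum_iterate_graphLap_mul_conj_comm G m (hasFiniteSupport_iterate_graphLap G (m + 1) hu) hu]
    simp only [iterate_succ_apply']
    exact re_finsum_graphLap_mul_conj_self_nonpos G (hasFiniteSupport_iterate_graphLap G m hu)

lemma sq_dirichletEnergy_le (l : ℕ) (f : V → ℂ) :
    dirichletEnergy G Ω l f ^ 2 ≤
      dirichletEnergy G Ω (2 * l) f * ∑ x ∈ Ω, Complex.normSq (f x) := by
  have hu := hasFiniteSupport_extZero Ω f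
  have hnorm : ∑ᶠ x, ‖extZero Ω f x‖ ^ 2 = ∑ x ∈ Ω, Complex.normSq (f x) := by
    rw [finsum_eq_finsetSum_of_support_subset _ (s := Ω)
      fun x hx => support_extZero_subset Ω f (by simpa using hx)]
    exact sum_congr rfl fun x hx => by rw [extZero_of_mem Ω hx, Complex.sq_norm]
  rw [dirichletEnergy_two_mul, ← hnorm, dirichletEnergy_eq_re_finsum]
  calc _ ≤ ‖(-1) ^ l * ∑ᶠ x, (graphLap G)^[l] (extZero Ω f) x * conj (extZero Ω f x)‖ ^ 2 := by
        rw [← sq_abs]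
        gcongr
        exact Complex.abs_re_le_norm _
    _ = ‖∑ᶠ x, (graphLap G)^[l] (extZero Ω f) x * conj (extZero Ω f x)‖ ^ 2 := by simp
    _ ≤ _ := norm_finsum_mul_conj_sq_le (hasFiniteSupport_iterate_graphLap G l hu) hu

end Energy

section MinMax

variable [DecidableEq V] (G : SimpleGraph V) [DecidableRel G.Adj] [G.LocallyFinite]
  (Ω : Finset V)

def dirichletUnitSphere : Set (V → ℂ) :=
  {f | (∀ x ∉ Ω, f x = 0) ∧ ∑ x ∈ Ω, Complex.normSq (f x) = 1}

lemma isCompact_dirichletUnitSphere : IsCompact (dirichletUnitSphere Ω) := by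
  refine (isCompact_univ_pi fun _ => isCompact_closedBall (0 : ℂ) 1).of_isClosed_subset ?_ ?_
  · simp only [dirichletUnitSphere, Set.ofPred_and, Set.ofPred_forall]
    exact (isClosed_iInter fun x => isClosed_iInter fun _ =>
      isClosed_eq (continuous_apply x) continuous_const).inter
      (isClosed_eq (continuous_finsetSum _ fun x _ =>
        Complex.continuous_normSq.comp (continuous_apply x)) continuous_const)
  · rintro f ⟨hf0, hf1⟩ x -
    rw [Metric.mem_closedBall, dist_zero_right]
    by_cases hx : x ∈ Ω
    · have hsq : ‖f x‖ ^ 2 ≤ 1 := hf1 ▸ (Complex.sq_norm (f x)).symm ▸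
        single_le_sum (fun y _ => Complex.normSq_nonneg (f y)) hx
      simpa using (sq_le_one_iff_abs_le_one _).1 hsq
    · simp [hf0 x hx]

lemma continuous_extZero : Continuous (extZero Ω) :=
  continuous_pi fun x =>
    continuous_if_const _ (fun _ => continuous_apply x) fun _ => continuous_const

lemma continuous_dirichletEnergy (n : ℕ) : Continuous (dirichletEnergy G Ω n) := by
  have hpoly : Continuous (dirichletPolyLap G Ω n) :=
    ((continuous_graphLap G).iterate n).comp (continuous_extZero Ω)
  exact Complex.continuous_re.comp (continuous_finsetSum _ fun x _ =>
    (continuous_const.mul ((continuous_apply x).comp hpoly)).mul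
      (Complex.continuous_conj.comp (continuous_apply x)))

noncomputable def dirichletEnergySup (n : ℕ) (M : Set (V → ℂ)) : ℝ :=
  sSup {t | ∃ f ∈ M, (∑ x ∈ Ω, Complex.normSq (f x)) = 1 ∧ t = dirichletEnergy G Ω n f}

lemma dirichletEnergySup_nonneg (n : ℕ) (M : Set (V → ℂ)) :
    0 ≤ dirichletEnergySup G Ω n M :=
  Real.sSup_nonneg <| by
    rintro _ ⟨f, -, -, rfl⟩
    exact dirichletEnergy_nonneg G Ω n f

lemma bddAbove_dirichletEnergy (n : ℕ) {M : Set (V → ℂ)} (hM : ∀ f ∈ M, ∀ x ∉ Ω, f x = 0) :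
    BddAbove {t | ∃ f ∈ M, (∑ x ∈ Ω, Complex.normSq (f x)) = 1 ∧ t = dirichletEnergy G Ω n f} :=
  ((isCompact_dirichletUnitSphere Ω).bddAbove_image
    (continuous_dirichletEnergy G Ω n).continuousOn).mono <| by
      rintro _ ⟨f, hfM, hf1, rfl⟩
      exact ⟨f, ⟨hM f hfM, hf1⟩, rfl⟩

lemma dirichletEigenvalue_nonneg (n k : ℕ) : 0 ≤ dirichletEigenvalue G Ω n k :=
  Real.sInf_nonneg <| by
    rintro _ ⟨M, -, -, rfl⟩
    exact dirichletEnergySup_nonneg G Ω n M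

lemma dirichletEigenvalue_le_dirichletEnergySup (n : ℕ) {k : ℕ} {M : Submodule ℂ (V → ℂ)}
    (hMk : Module.finrank ℂ M = k) (hM : ∀ f ∈ M, ∀ x ∉ Ω, f x = 0) :
    dirichletEigenvalue G Ω n k ≤ dirichletEnergySup G Ω n M :=
  csInf_le ⟨0, by rintro _ ⟨M, -, -, rfl⟩; exact dirichletEnergySup_nonneg G Ω n M⟩
    ⟨M, hMk, hM, rfl⟩

lemma sq_dirichletEnergySup_le (l : ℕ) {M : Set (V → ℂ)} (hM : ∀ f ∈ M, ∀ x ∉ Ω, f x = 0) :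
    dirichletEnergySup G Ω l M ^ 2 ≤ dirichletEnergySup G Ω (2 * l) M := by
  have hle : dirichletEnergySup G Ω l M ≤ √(dirichletEnergySup G Ω (2 * l) M) := by
    refine Real.sSup_le ?_ (Real.sqrt_nonneg _)
    rintro _ ⟨f, hfM, hf1, rfl⟩
    have hsq := sq_dirichletEnergy_le G Ω l f
    rw [hf1, mul_one] at hsq
    exact (le_abs_self _).trans <| (Real.abs_le_sqrt hsq).trans <| Real.sqrt_le_sqrt <|
      le_csSup (bddAbove_dirichletEnergy G Ω (2 * l) hM) ⟨f, hfM, hf1, rfl⟩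
  calc _ ≤ √(dirichletEnergySup G Ω (2 * l) M) ^ 2 :=
        pow_le_pow_left₀ (dirichletEnergySup_nonneg G Ω l M) hle 2
    _ = _ := Real.sq_sqrt (dirichletEnergySup_nonneg G Ω (2 * l) M)

end MinMax

theorem stmt_8_general [DecidableEq V] (G : SimpleGraph V) [DecidableRel G.Adj] [G.LocallyFinite]
    (Ω : Finset V) (l : ℕ) (k : ℕ) :
    (dirichletEigenvalue G Ω l k) ^ 2 ≤ dirichletEigenvalue G Ω (2 * l) k := by
  by_cases hadm : ∃ M : Submodule ℂ (V → ℂ), Module.finrank ℂ M = k ∧ ∀ f ∈ M, ∀ x ∉ Ω, f x = 0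
  · obtain ⟨M₀, hM₀k, hM₀⟩ := hadm
    refine le_csInf ⟨_, M₀, hM₀k, hM₀, rfl⟩ ?_
    rintro _ ⟨M, hMk, hM, rfl⟩
    calc dirichletEigenvalue G Ω l k ^ 2 ≤ dirichletEnergySup G Ω l M ^ 2 :=
          pow_le_pow_left₀ (dirichletEigenvalue_nonneg G Ω l k)
            (dirichletEigenvalue_le_dirichletEnergySup G Ω l hMk hM) 2
      _ ≤ _ := sq_dirichletEnergySup_le G Ω l hM
  · -- no admissible subspace: both eigenvalues are the junk value `sInf ∅ = 0`
    have hzero : ∀ n, dirichletEigenvalue G Ω n k = 0 := fun n => by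
      unfold dirichletEigenvalue
      convert Real.sInf_empty
      refine Set.eq_empty_of_forall_notMem ?_
      rintro _ ⟨M, hMk, hM, -⟩
      exact hadm ⟨M, hMk, hM⟩
    rw [hzero, hzero]
    norm_num

/-- The Dirichlet `2l`-order poly-Laplace eigenvalues dominate the squares of the
Dirichlet `l`-order poly-Laplace eigenvalues: `(λ_k^l)² ≤ λ_k^{2l}`. -/
theorem stmt_8 [DecidableEq V] (G : SimpleGraph V) [DecidableRel G.Adj] [G.LocallyFinite]
    (Ω : Finset V) (l : ℕ) (hl : 0 < l) (k : ℕ) (hk1 : 1 ≤ k) (hk2 : k ≤ Ω.card) :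
    (dirichletEigenvalue G Ω l k) ^ 2 ≤ dirichletEigenvalue G Ω (2 * l) k :=
  stmt_8_general G Ω l k
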